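/- Stability (a priori) estimate for forward integral equations. Let g¹ be a Carathéodory driver with Lipschitz constant C, and let g² : ℝ → ℝ → ℝ be jointly measurable. For i = 1, 2, let xⁱ ∈ ℝ, let fⁱ : ℝ → ℝ be bounded and measurable, and let Vⁱ : ℝ → ℝ be bounded and measurable with Vⁱ t = xⁱ − (∫ s in [0, t], gⁱ s (Vⁱ s) ds) + fⁱ t for every t ∈ [0, T], where s ↦ g² s (V² s) is integrable on [0, T]. Then for every t ∈ [0, T]: |V¹ t − V² t| ≤ (|x¹ − x²| + (∫ s in [0, T], |g¹ s (V² s) − g² s (V² s)| ds) + sup over s ∈ [0, T] of |f¹ s − f² s|) · exp(C·t). -/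

import Mathlib

open MeasureTheory Set

/-- A bounded measurable real function. -/
def BddMeas (f : ℝ → ℝ) : Prop :=
  Measurable f ∧ ∃ M : ℝ, ∀ t : ℝ, |f t| ≤ M

/-- A Carathéodory driver with Lipschitz constant `C` on `[0, T]`. -/
def CaratheodoryDriver (T C : ℝ) (g : ℝ → ℝ → ℝ) : Prop :=
  Measurable (Function.uncurry g) ∧
  IntegrableOn (fun s => g s 0) (Icc 0 T) ∧
  ∀ s ∈ Icc (0 : ℝ) T, ∀ y₁ y₂ : ℝ, |g s y₁ - g s y₂| ≤ C * |y₁ - y₂|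

/-- A solution of the forward integral equation with data `(x, g, f)`:
a bounded measurable `V` with `V t = x - ∫_{[0,t]} g s (V s) ds + f t` on `[0, T]`. -/
def IsFwdSolution (T : ℝ) (g : ℝ → ℝ → ℝ) (x : ℝ) (f V : ℝ → ℝ) : Prop :=
  BddMeas V ∧
  ∀ t ∈ Icc (0 : ℝ) T, V t = x - (∫ s in Icc (0 : ℝ) t, g s (V s)) + f t

/-
Subtracting the two equations, `V₁ - V₂` is `x₁ - x₂ + f₁ - f₂` minus the integral of
`g₁(V₁) - g₂(V₂) = (g₁(V₁) - g₁(V₂)) + (g₁(V₂) - g₂(V₂))`. The first bracket is at most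
`C |V₁ - V₂|` by the Lipschitz property of `g₁`, and the integral of the second is the constant
in the estimate, so `u = |V₁ - V₂|` satisfies `u t ≤ A + C ∫₀ᵗ u`. Grönwall's lemma follows by
iterating this inequality from the crude bound `u ≤ M`: it turns the bound
`A e^{Cs} + M (Cs)ⁿ/n!` into the same bound with `n + 1`, and the remainder tends to `0`.
-/

open MeasureTheory Set Real

lemma BddMeas.sub {f g : ℝ → ℝ} (hf : BddMeas f) (hg : BddMeas g) :
    BddMeas (fun t => f t - g t) := by
  obtain ⟨hfm, M, hM⟩ := hf
  obtain ⟨hgm, N, hN⟩ := hg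
  exact ⟨hfm.sub hgm, M + N, fun t => (abs_sub _ _).trans (add_le_add (hM t) (hN t))⟩

lemma BddMeas.integrableOn {f : ℝ → ℝ} (hf : BddMeas f) {s : Set ℝ} (hs : volume s ≠ ⊤) :
    IntegrableOn f s := by
  obtain ⟨hfm, M, hM⟩ := hf
  exact Measure.integrableOn_of_bounded hs hfm.aestronglyMeasurable (ae_of_all _ hM)

lemma CaratheodoryDriver.integrableOn_comp {T C : ℝ} {g : ℝ → ℝ → ℝ}
    (hg : CaratheodoryDriver T C g) {V : ℝ → ℝ} (hV : BddMeas V) :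
    IntegrableOn (fun s => g s (V s)) (Icc 0 T) := by
  obtain ⟨hgm, hg0, hlip⟩ := hg
  obtain ⟨hVm, M, hM⟩ := hV
  refine Integrable.mono' (hg0.abs.add (integrableOn_const (C := |C| * M) measure_Icc_lt_top.ne))
    (hgm.comp (measurable_id.prodMk hVm)).aestronglyMeasurable ?_
  filter_upwards [ae_restrict_mem measurableSet_Icc] with s hs
  have hCV : C * |V s| ≤ |C| * M :=
    (mul_le_mul_of_nonneg_right (le_abs_self C) (abs_nonneg _)).trans
      (mul_le_mul_of_nonneg_left (hM s) (abs_nonneg C))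
  have hlip0 := hlip s hs (V s) 0
  rw [sub_zero] at hlip0
  show |g s (V s)| ≤ |g s 0| + |C| * M
  linarith [abs_sub_abs_le_abs_sub (g s (V s)) (g s 0)]

lemma mul_integral_Icc_exp_add_pow_div_factorial (A C M : ℝ) (n : ℕ) {t : ℝ} (ht : 0 ≤ t) :
    C * ∫ s in Icc 0 t, (A * exp (C * s) + M * ((C * s) ^ n / n.factorial)) =
      A * exp (C * t) + M * ((C * t) ^ (n + 1) / (n + 1).factorial) - A := by
  rw [integral_Icc_eq_integral_Ioc, ← intervalIntegral.integral_of_le ht,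
    ← intervalIntegral.integral_const_mul,
    intervalIntegral.integral_eq_sub_of_hasDerivAt (f := fun s =>
      A * exp (C * s) + M * ((C * s) ^ (n + 1) / (n + 1).factorial))]
  · simp
  · intro s _
    have hlin : HasDerivAt (fun s => C * s) C s := by
      simpa using (hasDerivAt_id s).const_mul C
    convert (hlin.exp.const_mul A).fun_add
      (((hlin.fun_pow (n + 1)).div_const ((n + 1).factorial : ℝ)).const_mul M) using 1
    rw [Nat.factorial_succ, Nat.add_sub_cancel]
    push_cast
    field_simp
  · exact (by fun_prop : Continuous _).intervalIntegrable _ _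

theorem le_mul_exp_of_le_add_mul_integral {u : ℝ → ℝ} {T C A M : ℝ} (hC : 0 ≤ C) (hA : 0 ≤ A)
    (hu_int : IntegrableOn u (Icc 0 T)) (hu_bdd : ∀ t ∈ Icc 0 T, u t ≤ M)
    (hu : ∀ t ∈ Icc 0 T, u t ≤ A + C * ∫ s in Icc 0 t, u s) :
    ∀ t ∈ Icc 0 T, u t ≤ A * exp (C * t) := by
  have iterate : ∀ n : ℕ, ∀ t ∈ Icc 0 T,
      u t ≤ A * exp (C * t) + M * ((C * t) ^ n / n.factorial) := by
    intro n
    induction n with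
    | zero =>
      intro t ht
      simpa using (hu_bdd t ht).trans (le_add_of_nonneg_left (by positivity))
    | succ n ih =>
      intro t ht
      have hsub : Icc 0 t ⊆ Icc 0 T := Icc_subset_Icc_right ht.2
      calc u t ≤ A + C * ∫ s in Icc 0 t, u s := hu t ht
        _ ≤ A + C * ∫ s in Icc 0 t, (A * exp (C * s) + M * ((C * s) ^ n / n.factorial)) := by
          have := setIntegral_mono_on (hu_int.mono_set hsub)
            (by fun_prop : Continuous _).integrableOn_Icc measurableSet_Icc
            fun s hs => ih s (hsub hs)
          gcongr
        _ = _ := by rw [mul_integral_Icc_exp_add_pow_div_factorial A C M n ht.1]; ring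
  intro t ht
  have hlim := ((FloorSemiring.tendsto_pow_div_factorial_atTop (C * t)).const_mul M).const_add
    (A * exp (C * t))
  simpa using ge_of_tendsto' hlim fun n => iterate n t ht

lemma abs_integral_sub_integral_le {T C : ℝ} {g₁ g₂ : ℝ → ℝ → ℝ}
    (hg₁ : CaratheodoryDriver T C g₁) {V₁ V₂ : ℝ → ℝ} (hV₁ : BddMeas V₁) (hV₂ : BddMeas V₂)
    (hint : IntegrableOn (fun s => g₂ s (V₂ s)) (Icc 0 T)) {t : ℝ} (ht : t ∈ Icc 0 T) :
    |(∫ s in Icc 0 t, g₁ s (V₁ s)) - ∫ s in Icc 0 t, g₂ s (V₂ s)| ≤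
      C * (∫ s in Icc 0 t, |V₁ s - V₂ s|) + ∫ s in Icc 0 T, |g₁ s (V₂ s) - g₂ s (V₂ s)| := by
  have hsub : Icc 0 t ⊆ Icc 0 T := Icc_subset_Icc_right ht.2
  have hint₁₁ := hg₁.integrableOn_comp hV₁
  have hdiff : IntegrableOn (fun s => g₁ s (V₂ s) - g₂ s (V₂ s)) (Icc 0 T) :=
    (hg₁.integrableOn_comp hV₂).sub hint
  have hu : IntegrableOn (fun s => |V₁ s - V₂ s|) (Icc 0 T) :=
    ((hV₁.sub hV₂).integrableOn measure_Icc_lt_top.ne).abs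
  rw [← integral_sub (hint₁₁.mono_set hsub) (hint.mono_set hsub), ← integral_const_mul]
  calc _ ≤ ∫ s in Icc 0 t, |g₁ s (V₁ s) - g₂ s (V₂ s)| := abs_integral_le_integral_abs
    _ ≤ ∫ s in Icc 0 t, (C * |V₁ s - V₂ s| + |g₁ s (V₂ s) - g₂ s (V₂ s)|) := by
      refine setIntegral_mono_on ((hint₁₁.sub hint).mono_set hsub).abs
        (IntegrableOn.mono_set ((hu.const_mul C).add hdiff.abs) hsub) measurableSet_Icc fun s hs => ?_
      calc _ ≤ |g₁ s (V₁ s) - g₁ s (V₂ s)| + |g₁ s (V₂ s) - g₂ s (V₂ s)| := abs_sub_le _ _ _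
        _ ≤ _ := by gcongr; exact hg₁.2.2 s (hsub hs) _ _
    _ ≤ _ := by
      rw [integral_add (IntegrableOn.mono_set (hu.const_mul C) hsub)
        (IntegrableOn.mono_set hdiff.abs hsub)]
      exact add_le_add le_rfl <| setIntegral_mono_set hdiff.abs (ae_of_all _ fun s => abs_nonneg _)
        hsub.eventuallyLE

theorem forward_eq_stability_general
    (T C : ℝ) (hC : 0 ≤ C)
    (g₁ : ℝ → ℝ → ℝ) (hg₁ : CaratheodoryDriver T C g₁)
    (g₂ : ℝ → ℝ → ℝ)
    (x₁ x₂ : ℝ) (f₁ f₂ : ℝ → ℝ) (hf₁ : BddMeas f₁) (hf₂ : BddMeas f₂)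
    (V₁ V₂ : ℝ → ℝ) (hV₁ : BddMeas V₁) (hV₂ : BddMeas V₂)
    (hV₁eq : ∀ t ∈ Icc (0 : ℝ) T,
      V₁ t = x₁ - (∫ s in Icc (0 : ℝ) t, g₁ s (V₁ s)) + f₁ t)
    (hV₂eq : ∀ t ∈ Icc (0 : ℝ) T,
      V₂ t = x₂ - (∫ s in Icc (0 : ℝ) t, g₂ s (V₂ s)) + f₂ t)
    (hint : IntegrableOn (fun s => g₂ s (V₂ s)) (Icc 0 T)) :
    ∀ t ∈ Icc (0 : ℝ) T,
      |V₁ t - V₂ t| ≤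
        (|x₁ - x₂| + (∫ s in Icc (0 : ℝ) T, |g₁ s (V₂ s) - g₂ s (V₂ s)|) +
          sSup ((fun s => |f₁ s - f₂ s|) '' Icc (0 : ℝ) T)) * Real.exp (C * t) := by
  intro t ht
  obtain ⟨-, N, hN⟩ := hf₁.sub hf₂
  have hf_le : ∀ s ∈ Icc 0 T, |f₁ s - f₂ s| ≤ sSup ((fun s => |f₁ s - f₂ s|) '' Icc 0 T) :=
    fun s hs => le_csSup ⟨N, forall_mem_image.2 fun s _ => hN s⟩ (mem_image_of_mem _ hs)
  have hD : 0 ≤ ∫ s in Icc (0 : ℝ) T, |g₁ s (V₂ s) - g₂ s (V₂ s)| :=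
    integral_nonneg fun s => abs_nonneg _
  obtain ⟨-, M, hM⟩ := hV₁.sub hV₂
  refine le_mul_exp_of_le_add_mul_integral hC
    (by linarith [abs_nonneg (x₁ - x₂), (abs_nonneg _).trans (hf_le t ht)])
    ((hV₁.sub hV₂).integrableOn measure_Icc_lt_top.ne).abs (fun s _ => hM s)
    (fun s hs => ?_) t ht
  calc |V₁ s - V₂ s|
      = |(x₁ - x₂) + -((∫ r in Icc 0 s, g₁ r (V₁ r)) - ∫ r in Icc 0 s, g₂ r (V₂ r)) +
          (f₁ s - f₂ s)| := by rw [hV₁eq s hs, hV₂eq s hs]; ring_nf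
    _ ≤ |x₁ - x₂| + |(∫ r in Icc 0 s, g₁ r (V₁ r)) - ∫ r in Icc 0 s, g₂ r (V₂ r)| +
          |f₁ s - f₂ s| := (abs_add_three _ _ _).trans_eq (by rw [abs_neg])
    _ ≤ _ := by
      linarith [abs_integral_sub_integral_le hg₁ hV₁ hV₂ hint hs, hf_le s hs]

/-- Stability (a priori) estimate for forward integral equations. -/
theorem forward_eq_stability
    (T C : ℝ) (hT : 0 < T) (hC : 0 ≤ C)
    (g₁ : ℝ → ℝ → ℝ) (hg₁ : CaratheodoryDriver T C g₁)
    (g₂ : ℝ → ℝ → ℝ) (hg₂ : Measurable (Function.uncurry g₂))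
    (x₁ x₂ : ℝ) (f₁ f₂ : ℝ → ℝ) (hf₁ : BddMeas f₁) (hf₂ : BddMeas f₂)
    (V₁ V₂ : ℝ → ℝ) (hV₁ : BddMeas V₁) (hV₂ : BddMeas V₂)
    (hV₁eq : ∀ t ∈ Icc (0 : ℝ) T,
      V₁ t = x₁ - (∫ s in Icc (0 : ℝ) t, g₁ s (V₁ s)) + f₁ t)
    (hV₂eq : ∀ t ∈ Icc (0 : ℝ) T,
      V₂ t = x₂ - (∫ s in Icc (0 : ℝ) t, g₂ s (V₂ s)) + f₂ t)
    (hint : IntegrableOn (fun s => g₂ s (V₂ s)) (Icc 0 T)) :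
    ∀ t ∈ Icc (0 : ℝ) T,
      |V₁ t - V₂ t| ≤
        (|x₁ - x₂| + (∫ s in Icc (0 : ℝ) T, |g₁ s (V₂ s) - g₂ s (V₂ s)|) +
          sSup ((fun s => |f₁ s - f₂ s|) '' Icc (0 : ℝ) T)) * Real.exp (C * t) :=
  forward_eq_stability_general T C hC g₁ hg₁ g₂ x₁ x₂ f₁ f₂ hf₁ hf₂ V₁ V₂ hV₁ hV₂ hV₁eq hV₂eq hint
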